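/- arXiv:1608.03115 — 4 statements merged into one kernel-verified Lean document; each statement's English description precedes it below -/
import Mathlib

section
/- If x̂ ∈ S is a weak efficient solution of (P) and the weak Abadie data qualification (WADQ) holds at x̂, then 0 ∈ F_*(x̂) + cl(G_*(x̂)). -/
/-!
Strictly separate the compact convex set `conv F(x̂)` from the closed convex cone `-cl G_*(x̂)`:
the separating direction `d` lies in `F(x̂)⁻ ∩ G(x̂)⁰`, so by WADQ it is tangent to `S` at `x̂`.
For each objective, a hyperplane supporting the strict epigraph shows that `⟪ξ, d⟫ < 0` on
`∂f_i(x̂)` forces `f_i(x̂ + τ₀ d) < f_i(x̂)` for some `τ₀ > 0`; convexity and continuity spread this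
decrease to all `x̂ + τ w` with `τ` small and `w` near `d`, in particular to the points of `S`
approaching `x̂` along `d`, contradicting weak efficiency.
-/

open Set Filter Topology
open scoped RealInnerProductSpace Pointwise

noncomputable section

namespace MOSIP

variable {n : ℕ} {T : Type*} {p : ℕ}

/-- The decision space `ℝ^n`. -/
abbrev Eucl (n : ℕ) := EuclideanSpace ℝ (Fin n)

/-- Subdifferential of a real-valued function. -/
def subdiff (h : Eucl n → ℝ) (x : Eucl n) : Set (Eucl n) :=
  {ξ | ∀ y, h x + ⟪ξ, y - x⟫ ≤ h y}

/-- Subdifferential of an extended-real-valued function. -/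
def subdiffE (h : Eucl n → EReal) (x : Eucl n) : Set (Eucl n) :=
  {ξ | ∀ y, h x + ((⟪ξ, y - x⟫ : ℝ) : EReal) ≤ h y}

/-- Convexity of an extended-real-valued function. -/
def ConvexE (h : Eucl n → EReal) : Prop :=
  ∀ x y : Eucl n, ∀ a b : ℝ, 0 ≤ a → 0 ≤ b → a + b = 1 →
    h (a • x + b • y) ≤ (a : EReal) * h x + (b : EReal) * h y

/-- Proper (with values in `ℝ ∪ {+∞}`): never `−∞` and not identically `+∞`. -/
def ProperE (h : Eucl n → EReal) : Prop :=
  (∀ x, h x ≠ ⊥) ∧ (∃ x, h x ≠ ⊤)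

/-- Feasible set `S` of the problem `(P)`. -/
def feasSet (g : T → Eucl n → EReal) : Set (Eucl n) := {x | ∀ t, g t x ≤ 0}

/-- Active indices `T(x)`. -/
def activeIx (g : T → Eucl n → EReal) (x : Eucl n) : Set T := {t | g t x = 0}

/-- `ε`-active indices `T_ε(x)`. -/
def activeIxEps (g : T → Eucl n → EReal) (x : Eucl n) (ε : ℝ) : Set T :=
  {t | ((-ε : ℝ) : EReal) ≤ g t x}

/-- `F(xh) = ⋃ i, ∂f_i(xh)`. -/
def FSet (f : Fin p → Eucl n → ℝ) (x : Eucl n) : Set (Eucl n) := ⋃ i, subdiff (f i) x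

/-- `G(xh) = ⋃_{t ∈ T(xh)} ∂g_t(xh)`. -/
def GSet (g : T → Eucl n → EReal) (x : Eucl n) : Set (Eucl n) :=
  ⋃ t ∈ activeIx g x, subdiffE (g t) x

/-- The smallest convex cone containing `M` and `0`: all finite nonnegative combinations. -/
def coneHull (M : Set (Eucl n)) : Set (Eucl n) :=
  {x | ∃ (s : Finset (Eucl n)) (c : Eucl n → ℝ), ↑s ⊆ M ∧ (∀ v ∈ s, 0 ≤ c v) ∧
    x = ∑ v ∈ s, c v • v}

/-- Negative polar cone `M⁰`. -/
def negPolar (M : Set (Eucl n)) : Set (Eucl n) := {d | ∀ ξ ∈ M, ⟪ξ, d⟫ ≤ 0}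

/-- Strictly negative polar cone `M⁻`. -/
def strictNegPolar (M : Set (Eucl n)) : Set (Eucl n) := {d | ∀ ξ ∈ M, ⟪ξ, d⟫ < 0}

/-- Contingent (Bouligand tangent) cone of `M` at `x`. -/
def contingentCone (M : Set (Eucl n)) (x : Eucl n) : Set (Eucl n) :=
  {v | ∃ (τ : ℕ → ℝ) (w : ℕ → Eucl n), (∀ r, 0 < τ r) ∧ Tendsto τ atTop (𝓝 0) ∧
    Tendsto w atTop (𝓝 v) ∧ ∀ r, x + τ r • w r ∈ M}

/-- Normal cone `N(M, x) := C(M, x)⁰`. -/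
def normalCone (M : Set (Eucl n)) (x : Eucl n) : Set (Eucl n) :=
  negPolar (contingentCone M x)

/-- Weak efficient solution. -/
def WeakEff (f : Fin p → Eucl n → ℝ) (S : Set (Eucl n)) (xh : Eucl n) : Prop :=
  ¬ ∃ x ∈ S, ∀ i, f i x < f i xh

/-- Efficient solution. -/
def Eff (f : Fin p → Eucl n → ℝ) (S : Set (Eucl n)) (xh : Eucl n) : Prop :=
  ¬ ∃ x ∈ S, (∀ i, f i x ≤ f i xh) ∧ ∃ j, f j x < f j xh

/-- Isolated efficient solution with constant `ν`:
`max_i (f_i(x) − f_i(xh)) ≥ ν‖x − xh‖` on `S`. -/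
def IsolatedEff (f : Fin p → Eucl n → ℝ) (S : Set (Eucl n)) (xh : Eucl n) (ν : ℝ) : Prop :=
  ∀ x ∈ S, ∃ i, ν * ‖x - xh‖ ≤ f i x - f i xh

/-- `w ∈ Σ α_i ∂f_i(xh) + Σ_{t ∈ T*} β_t ∂g_t(xh)` with multipliers as described,
where `Nonneg`/`Pos` refers to the sign condition on the `α_i`. -/
def KKTPoint (f : Fin p → Eucl n → ℝ) (g : T → Eucl n → EReal) (xh : Eucl n)
    (w : Eucl n) : Prop :=
  ∃ (α : Fin p → ℝ) (Ts : Finset T) (β : T → ℝ) (ξ : Fin p → Eucl n) (ζ : T → Eucl n),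
    (∀ i, 0 ≤ α i) ∧ ∑ i, α i = 1 ∧ (∀ t ∈ Ts, t ∈ activeIx g xh) ∧
    (∀ t ∈ Ts, 0 ≤ β t) ∧ (∀ i, ξ i ∈ subdiff (f i) xh) ∧
    (∀ t ∈ Ts, ζ t ∈ subdiffE (g t) xh) ∧
    ∑ i, α i • ξ i + ∑ t ∈ Ts, β t • ζ t = w

/-- The weak KKT condition at `xh`. -/
def WeakKKT (f : Fin p → Eucl n → ℝ) (g : T → Eucl n → EReal) (xh : Eucl n) : Prop :=
  KKTPoint f g xh 0

/-- The strong KKT condition at `xh` (all objective multipliers positive). -/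
def StrongKKT (f : Fin p → Eucl n → ℝ) (g : T → Eucl n → EReal) (xh : Eucl n) : Prop :=
  ∃ (α : Fin p → ℝ) (Ts : Finset T) (β : T → ℝ) (ξ : Fin p → Eucl n) (ζ : T → Eucl n),
    (∀ i, 0 < α i) ∧ ∑ i, α i = 1 ∧ (∀ t ∈ Ts, t ∈ activeIx g xh) ∧
    (∀ t ∈ Ts, 0 ≤ β t) ∧ (∀ i, ξ i ∈ subdiff (f i) xh) ∧
    (∀ t ∈ Ts, ζ t ∈ subdiffE (g t) xh) ∧
    ∑ i, α i • ξ i + ∑ t ∈ Ts, β t • ζ t = 0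

/-- The perturbed KKT condition at `xh` with constant `ν`. -/
def PerturbedKKT (f : Fin p → Eucl n → ℝ) (g : T → Eucl n → EReal) (xh : Eucl n)
    (ν : ℝ) : Prop :=
  ∀ w : Eucl n, ‖w‖ ≤ ν → KKTPoint f g xh w

/-- The gap function `ϑ(x, ξ, λ) = sup_{y ∈ S} Σ_i λ_i ⟪ξ_i, x − y⟫`. -/
def gapFn (S : Set (Eucl n)) (x : Eucl n) (ξ : Fin p → Eucl n) (lam : Fin p → ℝ) : EReal :=
  ⨆ y ∈ S, ((∑ i, lam i * ⟪ξ i, x - y⟫ : ℝ) : EReal)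

/-- The unit simplex of multipliers. -/
def simplex (lam : Fin p → ℝ) : Prop := (∀ i, 0 ≤ lam i) ∧ ∑ i, lam i = 1

/-- Supremum (marginal) function `ψ(x) = sup_t g_t(x)`. -/
def supFn (g : T → Eucl n → EReal) (x : Eucl n) : EReal := ⨆ t, g t x

/-- Directional derivative of a convex extended-real-valued function,
`h'(x; d) = inf_{τ > 0} (h(x + τ d) − h(x))/τ` (the limit as `τ ↓ 0`). -/
def dirDeriv (h : Eucl n → EReal) (x d : Eucl n) : EReal :=
  ⨅ τ ∈ Ioi (0 : ℝ), (h (x + τ • d) - h x) * ((τ⁻¹ : ℝ) : EReal)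

/-- Every constraint is (real-valued and) continuously differentiable around `xh`,
with gradient `gr t` at `xh`. -/
def SmoothConstraintsAt (g : T → Eucl n → EReal) (gr : T → Eucl n) (xh : Eucl n) : Prop :=
  ∀ t, ∃ (h : Eucl n → ℝ) (U : Set (Eucl n)), U ∈ 𝓝 xh ∧ (∀ y ∈ U, g t y = (h y : EReal)) ∧
    ContDiffOn ℝ 1 h U ∧ gradient h xh = gr t

/-- Slater CQ. -/
def SCQ (g : T → Eucl n → EReal) : Prop := ∃ x₀ : Eucl n, ∀ t, g t x₀ < 0

/-- Mangasarian–Fromovitz CQ at `xh`. -/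
def MFCQ (g : T → Eucl n → EReal) (xh : Eucl n) : Prop :=
  (GSet g xh).Nonempty ∧ (strictNegPolar (GSet g xh)).Nonempty

/-- Perturbed Mangasarian–Fromovitz CQ at `xh`. -/
def PMFCQ (g : T → Eucl n → EReal) (xh : Eucl n) : Prop :=
  ∃ xs : Eucl n,
    (⨅ ε ∈ Ioi (0 : ℝ), ⨆ ξ ∈ ⋃ t ∈ activeIxEps g xh ε, subdiffE (g t) xh,
      ((⟪ξ, xs⟫ : ℝ) : EReal)) < 0

/-- Local Farkas–Minkowski CQ at `xh`. -/
def LFMCQ (g : T → Eucl n → EReal) (xh : Eucl n) : Prop :=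
  normalCone (feasSet g) xh = coneHull (GSet g xh)

/-- Closed cone CQ at `xh`. -/
def CCCQ (g : T → Eucl n → EReal) (xh : Eucl n) : Prop :=
  IsClosed (coneHull (GSet g xh))

/-- Abadie CQ at `xh`. -/
def ACQ (g : T → Eucl n → EReal) (xh : Eucl n) : Prop :=
  (GSet g xh).Nonempty ∧ negPolar (GSet g xh) ⊆ contingentCone (feasSet g) xh

/-- Kuhn–Tucker CQ at `xh`. -/
def KTCQ (g : T → Eucl n → EReal) (xh : Eucl n) : Prop :=
  {d | dirDeriv (supFn g) xh d ≤ 0} ⊆ contingentCone (feasSet g) xh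

/-- Pshenichnyi–Levin–Valadier CQ at `xh`. -/
def PLVCQ (g : T → Eucl n → EReal) (xh : Eucl n) : Prop :=
  subdiffE (supFn g) xh ⊆ coneHull (GSet g xh)

/-- Weak Abadie DQ at `xh`. -/
def WADQ (f : Fin p → Eucl n → ℝ) (g : T → Eucl n → EReal) (xh : Eucl n) : Prop :=
  (GSet g xh).Nonempty ∧
    strictNegPolar (FSet f xh) ∩ negPolar (GSet g xh) ⊆ contingentCone (feasSet g) xh

/-- The sublevel sets `Q^i(xh)`. -/
def QSet (f : Fin p → Eucl n → ℝ) (S : Set (Eucl n)) (xh : Eucl n) (i : Fin p) :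
    Set (Eucl n) :=
  {x ∈ S | ∀ l, l ≠ i → f l x ≤ f l xh}

/-- Extended Abadie DQ at `xh`. -/
def EADQ (f : Fin p → Eucl n → ℝ) (g : T → Eucl n → EReal) (xh : Eucl n) : Prop :=
  (GSet g xh).Nonempty ∧
    negPolar (FSet f xh) ∩ negPolar (GSet g xh) ⊆
      ⋂ i, contingentCone (QSet f (feasSet g) xh i) xh

/-- Maeda objective qualification at `xh`. -/
def MOQ (f : Fin p → Eucl n → ℝ) (xh : Eucl n) : Prop :=
  negPolar (FSet f xh) ⊆ {0} ∪ ⋃ i, strictNegPolar (subdiff (f i) xh)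

variable {n p : ℕ} {T : Type*}

section ConvexHullCompact

variable {E : Type*} [TopologicalSpace E] [AddCommGroup E] [Module ℝ E] [ContinuousAdd E]
  [ContinuousSMul ℝ E] {s t : Set E}

theorem isCompact_convexJoin (hs : IsCompact s) (ht : IsCompact t) :
    IsCompact (convexJoin ℝ s t) := by
  have : convexJoin ℝ s t =
      (fun q : E × E × ℝ => (1 - q.2.2) • q.1 + q.2.2 • q.2.1) '' s ×ˢ t ×ˢ Icc 0 1 := by
    ext z
    simp only [mem_convexJoin, segment_eq_image, mem_image, mem_prod, Prod.exists]
    aesop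
  rw [this]
  exact (hs.prod (ht.prod isCompact_Icc)).image (by fun_prop)

theorem isCompact_convexHull_iUnion {ι : Type*} [Finite ι] {K : ι → Set E}
    (hK : ∀ i, IsCompact (convexHull ℝ (K i))) : IsCompact (convexHull ℝ (⋃ i, K i)) := by
  classical
  have := Fintype.ofFinite ι
  suffices ∀ u : Finset ι, IsCompact (convexHull ℝ (⋃ i ∈ u, K i)) by
    simpa using this Finset.univ
  intro u
  induction u using Finset.induction_on with
  | empty => simp
  | insert a u _ ih =>
    rw [Finset.set_biUnion_insert]
    rcases (K a).eq_empty_or_nonempty with ha | ha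
    · simpa [ha] using ih
    rcases (⋃ i ∈ u, K i).eq_empty_or_nonempty with hu | hu
    · simpa [hu] using hK a
    rw [convexHull_union ha hu]
    exact isCompact_convexJoin (hK a) ih

end ConvexHullCompact

theorem zero_mem_coneHull (M : Set (Eucl n)) : (0 : Eucl n) ∈ coneHull M :=
  ⟨∅, 0, by simp, by simp, by simp⟩

theorem smul_mem_coneHull {M : Set (Eucl n)} {v : Eucl n} (hv : v ∈ M) {c : ℝ} (hc : 0 ≤ c) :
    c • v ∈ coneHull M := by
  classical
  exact ⟨{v}, fun _ => c, by simpa using hv, by simpa using hc, by simp⟩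

theorem convex_coneHull (M : Set (Eucl n)) : Convex ℝ (coneHull M) := by
  classical
  rintro _ ⟨s, c, hsM, hc, rfl⟩ _ ⟨s', c', hsM', hc', rfl⟩ a b ha hb -
  refine ⟨s ∪ s', fun v => (if v ∈ s then a * c v else 0) + (if v ∈ s' then b * c' v else 0),
    by simpa using union_subset hsM hsM', fun v _ => add_nonneg ?_ ?_, ?_⟩
  · split_ifs with h
    exacts [mul_nonneg ha (hc v h), le_rfl]
  · split_ifs with h
    exacts [mul_nonneg hb (hc' v h), le_rfl]
  · simp only [add_smul, ite_smul, zero_smul, Finset.sum_add_distrib, Finset.sum_ite_mem,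
      Finset.union_inter_cancel_left, Finset.union_inter_cancel_right, Finset.smul_sum, smul_smul]

theorem exists_mem_strictNegPolar_inter_negPolar {F G : Set (Eucl n)}
    (hF : IsCompact (convexHull ℝ F))
    (h0 : (0 : Eucl n) ∉ convexHull ℝ F + closure (coneHull G)) :
    ∃ d, d ∈ strictNegPolar F ∧ d ∈ negPolar G := by
  have hdisj : Disjoint (convexHull ℝ F) (-closure (coneHull G)) :=
    disjoint_left.2 fun a ha haG => h0 ⟨a, ha, -a, haG, add_neg_cancel a⟩
  obtain ⟨φ, u, v, hφF, huv, hφG⟩ := geometric_hahn_banach_compact_closed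
    (convex_convexHull ℝ F) hF (convex_coneHull G).closure.neg isClosed_closure.neg hdisj
  set d := (InnerProductSpace.toDual ℝ (Eucl n)).symm φ
  have hd : ∀ ξ, ⟪ξ, d⟫ = φ ξ := fun ξ => by
    rw [real_inner_comm, InnerProductSpace.toDual_symm_apply]
  have hv : v < 0 := by
    simpa using hφG 0 (by simpa using subset_closure (zero_mem_coneHull G))
  refine ⟨d, fun ξ hξ => ?_, fun ζ hζ => ?_⟩
  · rw [hd]
    linarith [hφF ξ (subset_convexHull ℝ F hξ)]
  · rw [hd]
    by_contra! hpos
    -- `v < φ (-(λ • ζ))` for every `λ ≥ 0`, which fails for large `λ` when `0 < φ ζ`.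
    have := hφG (-((-v / φ ζ) • ζ)) (by
      rw [Set.neg_mem_neg]
      exact subset_closure (smul_mem_coneHull hζ (div_nonneg (by linarith) hpos.le)))
    rw [map_neg, map_smul, smul_eq_mul, div_mul_cancel₀ _ hpos.ne'] at this
    linarith

theorem _root_.ConvexOn.eventually_lt_of_lt {E : Type*} [NormedAddCommGroup E] [NormedSpace ℝ E]
    {f : E → ℝ} (hf : ConvexOn ℝ univ f) (hfc : Continuous f) {x d : E} {τ₀ : ℝ}
    (hτ₀ : 0 < τ₀) (hlt : f (x + τ₀ • d) < f x) :
    ∀ᶠ q in 𝓝[>] (0 : ℝ) ×ˢ 𝓝 d, f (x + q.1 • q.2) < f x := by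
  have hnear : ∀ᶠ w in 𝓝 d, f (x + τ₀ • w) < f x :=
    ((hfc.comp (continuous_const.add (continuous_const.smul continuous_id))).tendsto d).eventually
      (eventually_lt_nhds hlt)
  filter_upwards [prod_mem_prod (Ioc_mem_nhdsGT hτ₀) hnear]
  rintro ⟨τ, w⟩ ⟨⟨hτ, hτle⟩, hw⟩
  have hθ : 0 < τ / τ₀ := div_pos hτ hτ₀
  have hcomb : (1 - τ / τ₀) • x + (τ / τ₀) • (x + τ₀ • w) = x + τ • w := by
    rw [smul_add, smul_smul, div_mul_cancel₀ _ hτ₀.ne']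
    module
  have key := hf.2 (mem_univ x) (mem_univ (x + τ₀ • w))
    (sub_nonneg.2 ((div_le_one hτ₀).2 hτle)) hθ.le (sub_add_cancel 1 _)
  rw [hcomb, smul_eq_mul, smul_eq_mul] at key
  nlinarith [mul_lt_mul_of_pos_left hw hθ]

section Subdifferential

variable {f : Eucl n → ℝ}

theorem subdiff_eq_iInter (f : Eucl n → ℝ) (x : Eucl n) :
    subdiff f x = ⋂ y, {ξ | ⟪ξ, y - x⟫ ≤ f y - f x} := by
  ext ξ
  simp only [subdiff, mem_iInter, mem_ofPred_eq, le_sub_iff_add_le']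

theorem convex_subdiff (f : Eucl n → ℝ) (x : Eucl n) : Convex ℝ (subdiff f x) := by
  rw [subdiff_eq_iInter]
  exact convex_iInter fun y => convex_halfSpace_le
    ⟨fun a b => inner_add_left a b _, fun c a => real_inner_smul_left a _ c⟩ _

theorem isClosed_subdiff (f : Eucl n → ℝ) (x : Eucl n) : IsClosed (subdiff f x) := by
  rw [subdiff_eq_iInter]
  exact isClosed_iInter fun y => isClosed_le (continuous_id.inner continuous_const)
    continuous_const

theorem isBounded_subdiff (hf : Continuous f) (x : Eucl n) :
    Bornology.IsBounded (subdiff f x) := by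
  obtain ⟨M, hM⟩ := (isCompact_closedBall x 1).bddAbove_image hf.continuousOn
  have hfM : ∀ y ∈ Metric.closedBall x 1, f y ≤ M := fun y hy => hM (mem_image_of_mem f hy)
  refine (Metric.isBounded_closedBall (x := 0) (r := M - f x)).subset fun ξ hξ => ?_
  rw [mem_closedBall_zero_iff]
  rcases eq_or_ne ξ 0 with rfl | hξ0
  · simpa using hfM x (Metric.mem_closedBall_self zero_le_one)
  have hnorm : ‖ξ‖ ≠ 0 := norm_ne_zero_iff.2 hξ0
  have hinner : ⟪ξ, ‖ξ‖⁻¹ • ξ⟫ = ‖ξ‖ := by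
    rw [real_inner_smul_right, real_inner_self_eq_norm_sq]
    field_simp
  have hball : x + ‖ξ‖⁻¹ • ξ ∈ Metric.closedBall x 1 := by
    rw [Metric.mem_closedBall, dist_eq_norm, add_sub_cancel_left, norm_smul, norm_inv, norm_norm,
      inv_mul_cancel₀ hnorm]
  have := hξ (x + ‖ξ‖⁻¹ • ξ)
  rw [add_sub_cancel_left, hinner] at this
  linarith [hfM _ hball]

theorem isCompact_subdiff (hf : Continuous f) (x : Eucl n) : IsCompact (subdiff f x) :=
  Metric.isCompact_of_isClosed_isBounded (isClosed_subdiff f x) (isBounded_subdiff hf x)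

theorem exists_mem_subdiff_inner_nonneg (hf : ConvexOn ℝ univ f) {x d : Eucl n}
    (hmin : ∀ τ ∈ Icc (0 : ℝ) 1, f x ≤ f (x + τ • d)) : ∃ ξ ∈ subdiff f x, 0 ≤ ⟪ξ, d⟫ := by
  have hfc : Continuous f := hf.locallyLipschitz.continuous
  have hdisj : Disjoint {q : Eucl n × ℝ | f q.1 < q.2} (segment ℝ (x, f x) (x + d, f x)) := by
    refine disjoint_left.2 fun q hq ⟨a, b, ha, hb, hab, hq'⟩ => ?_
    subst hq'
    have hpt : a • x + b • (x + d) = x + b • d := by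
      obtain rfl : a = 1 - b := by linarith
      module
    have hval : a * f x + b * f x = f x := by rw [← add_mul, hab, one_mul]
    simp only [mem_ofPred_eq, Prod.fst_add, Prod.snd_add, Prod.smul_fst, Prod.smul_snd,
      smul_eq_mul, hpt, hval] at hq
    exact (hmin b ⟨hb, by linarith⟩).not_gt hq
  obtain ⟨φ, u, hepi, hseg⟩ := geometric_hahn_banach_open (by simpa using hf.convex_strict_epigraph)
    (isOpen_lt (hfc.comp continuous_fst) continuous_snd) (convex_segment _ _) hdisj
  set ℓ := φ.comp (ContinuousLinearMap.inl ℝ (Eucl n) ℝ)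
  set c := φ (0, 1)
  have hφ : ∀ v r, φ (v, r) = ℓ v + r * c := fun v r => by
    have : (v, r) = (v, 0) + r • ((0 : Eucl n), (1 : ℝ)) := by simp
    rw [this, map_add, map_smul, smul_eq_mul]
    rfl
  have hx : u ≤ ℓ x + f x * c := hφ x (f x) ▸ hseg _ (left_mem_segment ℝ _ _)
  have hc : c < 0 := by
    have := hφ x (f x + 1) ▸ hepi (x, f x + 1) (by simp)
    linarith
  -- `ℓ y + f y * c ≤ u`: the point `(y, f y)` lies in the closure of the strict epigraph.
  have hsupp : ∀ y, ℓ y + f y * c ≤ u := fun y => le_of_forall_pos_lt_add fun ε hε => by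
    have := hφ y (f y - ε / c) ▸ hepi (y, f y - ε / c) (by
      show f y < f y - ε / c
      linarith [div_neg_of_pos_of_neg hε hc])
    rwa [sub_mul, div_mul_cancel₀ _ hc.ne, ← add_sub_assoc, sub_lt_iff_lt_add] at this
  set ξ := (InnerProductSpace.toDual ℝ (Eucl n)).symm ((-c⁻¹) • ℓ)
  have hξ : ∀ v, ⟪ξ, v⟫ = -c⁻¹ * ℓ v := fun v => by
    rw [InnerProductSpace.toDual_symm_apply]
    rfl
  have hk : 0 < -c⁻¹ := neg_pos.2 (inv_lt_zero.2 hc)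
  refine ⟨ξ, fun y => ?_, ?_⟩
  · have h := mul_le_mul_of_nonneg_left (show ℓ y - ℓ x ≤ (f x - f y) * c by
      linarith [hsupp y]) hk.le
    have e : -c⁻¹ * ((f x - f y) * c) = f y - f x := by
      rw [mul_comm _ c, ← mul_assoc, neg_mul, inv_mul_cancel₀ hc.ne]
      ring
    rw [hξ, map_sub]
    linarith
  · have := hφ (x + d) (f x) ▸ hseg _ (right_mem_segment ℝ _ _)
    rw [map_add] at this
    rw [hξ]
    exact mul_nonneg hk.le (by linarith [hsupp x])

theorem eventually_lt_of_mem_strictNegPolar_subdiff (hf : ConvexOn ℝ univ f) {x d : Eucl n}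
    (hd : d ∈ strictNegPolar (subdiff f x)) :
    ∀ᶠ q in 𝓝[>] (0 : ℝ) ×ˢ 𝓝 d, f (x + q.1 • q.2) < f x := by
  obtain ⟨τ₀, hτ₀, hlt⟩ : ∃ τ ∈ Icc (0 : ℝ) 1, f (x + τ • d) < f x := by
    by_contra! hmin
    obtain ⟨ξ, hξ, hξd⟩ := exists_mem_subdiff_inner_nonneg hf hmin
    exact (hd ξ hξ).not_ge hξd
  have hpos : 0 < τ₀ := hτ₀.1.lt_of_ne (by rintro rfl; simp at hlt)
  exact hf.eventually_lt_of_lt hf.locallyLipschitz.continuous hpos hlt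

end Subdifferential

theorem isCompact_convexHull_FSet {f : Fin p → Eucl n → ℝ} (hf : ∀ i, ConvexOn ℝ univ (f i))
    (x : Eucl n) : IsCompact (convexHull ℝ (FSet f x)) :=
  isCompact_convexHull_iUnion fun i => by
    rw [(convex_subdiff (f i) x).convexHull_eq]
    exact isCompact_subdiff (hf i).locallyLipschitz.continuous x

theorem not_weakEff_of_mem_contingentCone {f : Fin p → Eucl n → ℝ} {S : Set (Eucl n)}
    {x d : Eucl n} (hf : ∀ i, ConvexOn ℝ univ (f i)) (hdF : d ∈ strictNegPolar (FSet f x))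
    (hdS : d ∈ contingentCone S x) : ¬ WeakEff f S x := by
  obtain ⟨τ, w, hτpos, hτ, hw, hmem⟩ := hdS
  have hlim : Tendsto (fun r => (τ r, w r)) atTop (𝓝[>] 0 ×ˢ 𝓝 d) :=
    (tendsto_nhdsWithin_iff.2 ⟨hτ, Eventually.of_forall hτpos⟩).prodMk hw
  have hdesc : ∀ᶠ r in atTop, ∀ i, f i (x + τ r • w r) < f i x :=
    eventually_all.2 fun i => hlim.eventually <| eventually_lt_of_mem_strictNegPolar_subdiff (hf i)
      fun ξ hξ => hdF ξ (mem_iUnion_of_mem i hξ)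
  obtain ⟨r, hr⟩ := hdesc.exists
  exact fun hweak => hweak ⟨_, hmem r, hr⟩

theorem stmt1_general
    (f : Fin p → Eucl n → ℝ) (g : T → Eucl n → EReal)
    (hf : ∀ i, ConvexOn ℝ Set.univ (f i))
    (xh : Eucl n)
    (hweak : WeakEff f (feasSet g) xh)
    (hwadq : WADQ f g xh) :
    (0 : Eucl n) ∈ convexHull ℝ (FSet f xh) + closure (coneHull (GSet g xh)) := by
  by_contra h0
  obtain ⟨d, hdF, hdG⟩ :=
    exists_mem_strictNegPolar_inter_negPolar (isCompact_convexHull_FSet hf xh) h0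
  exact not_weakEff_of_mem_contingentCone hf hdF (hwadq.2 ⟨hdF, hdG⟩) hweak

/-- If `x̂ ∈ S` is a weak efficient solution of `(P)` and WADQ holds at `x̂`,
then `0 ∈ F_*(x̂) + cl(G_*(x̂))`. -/
theorem stmt1
    (hn : 1 ≤ n) (hp : 1 ≤ p)
    (f : Fin p → Eucl n → ℝ) (g : T → Eucl n → EReal)
    (hf : ∀ i, ConvexOn ℝ Set.univ (f i))
    (hgconv : ∀ t, ConvexE (g t))
    (hgproper : ∀ t, ProperE (g t))
    (hglsc : ∀ t, LowerSemicontinuous (g t))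
    (xh : Eucl n) (hxS : xh ∈ feasSet g)
    (hweak : WeakEff f (feasSet g) xh)
    (hwadq : WADQ f g xh) :
    (0 : Eucl n) ∈ convexHull ℝ (FSet f xh) + closure (coneHull (GSet g xh)) :=
  stmt1_general f g hf xh hweak hwadq

end MOSIP
end
end

section
/- If the local Farkas–Minkowski constraint qualification (LFMCQ) holds at x̂ ∈ S, then x̂ is a weak efficient solution of (P) if and only if the weak KKT condition holds at x̂. -/
open Set Filter Topology
open scoped RealInnerProductSpace Pointwise

noncomputable section

namespace MOSIP

variable {n : ℕ} {T : Type*} {p : ℕ}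

variable {n p : ℕ} {T : Type*}

/-!
Weak efficiency of `xh` says that the open convex set
`{(v, z) | ∀ i, f i (xh + v i) - f i xh < z i}` of `(Fin p → ℝⁿ) × (Fin p → ℝ)` misses the convex
set `{(fun _ => y - xh, z) | y ∈ S, z ≤ 0}`. A separating functional has the form
`(v, z) ↦ ∑ i, (⟪η i, v i⟫ - λ i * z i)` with `λ ≥ 0`, `λ ≠ 0`, `η i ∈ λ i • ∂f_i(xh)` and
`-∑ i, η i` normal to `S` at `xh`; normalising `λ` gives `0 ∈ ∑ α_i ∂f_i(xh) + N(S, xh)`, and LFMCQ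
writes the normal vector as a nonnegative combination of subgradients of active constraints.
Conversely, pairing a KKT identity with `x - xh` for `x ∈ S` gives
`0 ≤ ∑ α_i (f_i x - f_i xh)`, so no feasible `x` improves every objective.
-/

lemma exists_eq_sum_inner_add_mul {ι E : Type*} [Fintype ι] [NormedAddCommGroup E]
    [InnerProductSpace ℝ E] [CompleteSpace E] (L : StrongDual ℝ ((ι → E) × (ι → ℝ))) :
    ∃ (η : ι → E) (μ : ι → ℝ), ∀ v z, L (v, z) = ∑ i, (⟪η i, v i⟫ + μ i * z i) := by
  classical
  refine ⟨fun i => (InnerProductSpace.toDual ℝ E).symm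
      (L.comp ((ContinuousLinearMap.inl ℝ _ _).comp (ContinuousLinearMap.single ℝ (fun _ => E) i))),
    fun i => L (0, Pi.single i 1), fun v z => ?_⟩
  have hvz : (v, z) = ∑ i, ((Pi.single i (v i), 0) + z i • ((0 : ι → E), Pi.single i (1 : ℝ))) := by
    ext <;> simp [Prod.fst_sum, Prod.snd_sum, Finset.sum_apply, Pi.single_apply]
  rw [hvz, map_sum]
  refine Finset.sum_congr rfl fun i _ => ?_
  rw [map_add, map_smul, smul_eq_mul, InnerProductSpace.toDual_symm_apply, mul_comm]
  rfl

section StrictEpigraphs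

variable {ι E : Type*} {F : ι → E → ℝ}

lemma isOpen_setOf_forall_lt [Finite ι] [TopologicalSpace E] (hF : ∀ i, Continuous (F i)) :
    IsOpen {q : (ι → E) × (ι → ℝ) | ∀ i, F i (q.1 i) < q.2 i} := by
  simp only [ofPred_forall]
  exact isOpen_iInter_of_finite fun i => isOpen_lt (by fun_prop) (by fun_prop)

lemma convex_setOf_forall_lt [AddCommGroup E] [Module ℝ E] (hF : ∀ i, ConvexOn ℝ univ (F i)) :
    Convex ℝ {q : (ι → E) × (ι → ℝ) | ∀ i, F i (q.1 i) < q.2 i} := by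
  simp only [ofPred_forall]
  refine convex_iInter fun i => ?_
  set π := (LinearMap.proj (R := ℝ) (φ := fun _ : ι => E) i).prodMap
    (LinearMap.proj (R := ℝ) (φ := fun _ : ι => ℝ) i)
  have hπ : {q : (ι → E) × (ι → ℝ) | F i (q.1 i) < q.2 i} =
      π ⁻¹' {r | r.1 ∈ univ ∧ F i r.1 < r.2} := by
    ext q; simp [π]
  rw [hπ]
  exact (hF i).convex_strict_epigraph.linear_preimage π

lemma mem_closure_setOf_forall_lt [TopologicalSpace E] {q : (ι → E) × (ι → ℝ)}
    (hq : ∀ i, F i (q.1 i) ≤ q.2 i) :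
    q ∈ closure {q : (ι → E) × (ι → ℝ) | ∀ i, F i (q.1 i) < q.2 i} := by
  have hlim : Tendsto (fun ε : ℝ => (q.1, q.2 + fun _ => ε)) (𝓝[>] 0) (𝓝 q) :=
    ((by fun_prop : Continuous fun ε : ℝ => (q.1, q.2 + fun _ : ι => ε)).tendsto' 0 q
      (by ext <;> simp)).mono_left nhdsWithin_le_nhds
  refine mem_closure_of_tendsto hlim (eventually_nhdsWithin_of_forall fun ε hε i => ?_)
  simp only [Pi.add_apply]
  linarith [hq i, mem_Ioi.1 hε]

end StrictEpigraphs

theorem exists_multipliers_of_forall_exists_le {ι E : Type*} [Fintype ι] [NormedAddCommGroup E]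
    [InnerProductSpace ℝ E] [CompleteSpace E] {S : Set E} (hS : Convex ℝ S) {x : E}
    (hxS : x ∈ S) {f : ι → E → ℝ} (hfc : ∀ i, Continuous (f i))
    (hf : ∀ i, ConvexOn ℝ univ (f i)) (hx : ∀ y ∈ S, ∃ i, f i x ≤ f i y) :
    ∃ (lam : ι → ℝ) (η : ι → E), (∀ i, 0 ≤ lam i) ∧ 0 < ∑ i, lam i ∧
      (∀ i y, ⟪η i, y - x⟫ ≤ lam i * (f i y - f i x)) ∧ ∀ y ∈ S, 0 ≤ ∑ i, ⟪η i, y - x⟫ := by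
  classical
  set F : ι → E → ℝ := fun i w => f i (x + w) - f i x
  set A := {q : (ι → E) × (ι → ℝ) | ∀ i, F i (q.1 i) < q.2 i}
  set B := {q : (ι → E) × (ι → ℝ) | (∃ y ∈ S, ∀ i, q.1 i = y - x) ∧ q.2 ≤ 0}
  have hF : ∀ i, ConvexOn ℝ univ (F i) := fun i =>
    (((hf i).translate_right x).sub (concaveOn_const (f i x) convex_univ)).congr fun _ _ => rfl
  have hB : Convex ℝ B := by
    rintro ⟨v, z⟩ ⟨⟨y, hy, hv⟩, hz⟩ ⟨v', z'⟩ ⟨⟨y', hy', hv'⟩, hz'⟩ a b ha hb hab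
    refine ⟨⟨a • y + b • y', hS hy hy' ha hb hab, fun i => ?_⟩,
      add_nonpos (smul_nonpos_of_nonneg_of_nonpos ha hz) (smul_nonpos_of_nonneg_of_nonpos hb hz')⟩
    simp only at hv hv'
    simp only [Prod.fst_add, Prod.smul_fst, Pi.add_apply, Pi.smul_apply, hv, hv']
    linear_combination (norm := module) -hab • x
  have hAB : Disjoint A B := by
    refine Set.disjoint_left.2 fun q hqA ⟨⟨y, hy, hqy⟩, hq0⟩ => ?_
    obtain ⟨i, hi⟩ := hx y hy
    have := hqA i
    simp only [F, hqy, add_sub_cancel] at this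
    linarith [show q.2 i ≤ 0 from hq0 i]
  obtain ⟨L, u, hLA, hLB⟩ := geometric_hahn_banach_open (convex_setOf_forall_lt hF)
    (isOpen_setOf_forall_lt fun i => by fun_prop) hB hAB
  have hLA_le : ∀ q : (ι → E) × (ι → ℝ), (∀ i, F i (q.1 i) ≤ q.2 i) → L q ≤ u := fun q hq =>
    closure_minimal (fun a ha => (hLA a ha).le) (isClosed_le L.continuous continuous_const)
      (mem_closure_setOf_forall_lt hq)
  obtain ⟨η, μ, hL⟩ := exists_eq_sum_inner_add_mul L
  have hu : u = 0 := by
    refine le_antisymm ?_ ?_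
    · simpa [hL] using hLB (0, 0) ⟨⟨x, hxS, by simp⟩, le_rfl⟩
    · simpa [hL] using hLA_le (0, 0) (by simp [F])
  subst hu
  refine ⟨-μ, η, fun i => ?_, ?_, fun i y => ?_, fun y hy => ?_⟩
  · simpa [hL, Pi.single_apply] using hLB (0, -Pi.single i 1)
      ⟨⟨x, hxS, by simp⟩, by simp [Pi.single_nonneg]⟩
  · simpa [hL] using hLA (0, fun _ => 1) (fun i => by simp [F])
  · have := hLA_le (Pi.single i (y - x), Pi.single i (f i y - f i x)) fun j => by
      rcases eq_or_ne j i with rfl | hj <;> simp [F, *]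
    rw [hL, Fintype.sum_eq_single i fun j hj => by simp [Pi.single_eq_of_ne hj]] at this
    simp only [Pi.single_eq_same] at this
    rw [Pi.neg_apply]
    linarith
  · simpa [hL] using hLB (fun _ => y - x, 0) ⟨⟨y, hy, fun _ => rfl⟩, le_rfl⟩

lemma convex_subdiffE (h : Eucl n → EReal) (x : Eucl n) : Convex ℝ (subdiffE h x) := by
  have hlower : ∀ y, IsLowerSet {s : ℝ | h x + (s : EReal) ≤ h y} := fun y _ _ hle hs =>
    le_trans (add_le_add_right (EReal.coe_le_coe_iff.2 hle) _) hs
  have : subdiffE h x = ⋂ y, (innerSL ℝ (y - x)) ⁻¹' {s : ℝ | h x + (s : EReal) ≤ h y} := by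
    ext ξ
    simp only [subdiffE, mem_iInter, mem_preimage, mem_ofPred_eq, innerSL_apply_apply,
      real_inner_comm]
  rw [this]
  exact convex_iInter fun y =>
    (hlower y).ordConnected.convex.linear_preimage (innerSL ℝ (y - x)).toLinearMap

lemma convex_feasSet {g : T → Eucl n → EReal} (hg : ∀ t, ConvexE (g t)) :
    Convex ℝ (feasSet g) := by
  intro x hx y hy a b ha hb hab t
  calc g t (a • x + b • y) ≤ a * g t x + b * g t y := hg t x y a b ha hb hab
    _ ≤ 0 := add_nonpos (mul_nonpos_of_nonneg_of_nonpos (by exact_mod_cast ha) (hx t))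
        (mul_nonpos_of_nonneg_of_nonpos (by exact_mod_cast hb) (hy t))

lemma mem_normalCone_of_forall_inner_sub_nonpos {M : Set (Eucl n)} {x ν : Eucl n}
    (h : ∀ y ∈ M, ⟪ν, y - x⟫ ≤ 0) : ν ∈ normalCone M x := by
  rintro v ⟨τ, w, hτ, -, hw, hM⟩
  have hw_nonpos : ∀ r, ⟪w r, ν⟫ ≤ 0 := fun r => by
    have := h _ (hM r)
    rw [add_sub_cancel_left, real_inner_smul_right, real_inner_comm] at this
    exact nonpos_of_mul_nonpos_right this (hτ r)
  exact le_of_tendsto' (hw.inner tendsto_const_nhds) hw_nonpos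

lemma Convex.exists_sum_smul_eq_sum_smul {ι E : Type*} [AddCommGroup E] [Module ℝ E]
    {C : Set E} (hC : Convex ℝ C) {s : Finset ι} (hs : s.Nonempty) {c : ι → ℝ}
    (hc : ∀ i ∈ s, 0 ≤ c i) {v : ι → E} (hv : ∀ i ∈ s, v i ∈ C) :
    ∃ ζ ∈ C, ∑ i ∈ s, c i • v i = (∑ i ∈ s, c i) • ζ := by
  rcases (Finset.sum_nonneg hc).eq_or_lt with hzero | hpos
  · obtain ⟨i, hi⟩ := hs
    refine ⟨v i, hv i hi, ?_⟩
    rw [← hzero, zero_smul]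
    exact Finset.sum_eq_zero fun j hj => by
      rw [(Finset.sum_eq_zero_iff_of_nonneg hc).1 hzero.symm j hj, zero_smul]
  · exact ⟨s.centerMass c v, hC.centerMass_mem hc hpos hv,
      (smul_inv_smul₀ hpos.ne' _).symm⟩

lemma exists_sum_smul_eq_of_mem_coneHull {g : T → Eucl n → EReal} {x w : Eucl n}
    (hw : w ∈ coneHull (GSet g x)) :
    ∃ (Ts : Finset T) (β : T → ℝ) (ζ : T → Eucl n), (∀ t ∈ Ts, t ∈ activeIx g x) ∧
      (∀ t ∈ Ts, 0 ≤ β t) ∧ (∀ t ∈ Ts, ζ t ∈ subdiffE (g t) x) ∧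
      ∑ t ∈ Ts, β t • ζ t = w := by
  classical
  obtain ⟨s, c, hsG, hc, rfl⟩ := hw
  rcases s.eq_empty_or_nonempty with rfl | ⟨v₀, hv₀⟩
  · exact ⟨∅, 0, 0, by simp, by simp, by simp, by simp⟩
  have hG : ∀ v ∈ s, ∃ t, t ∈ activeIx g x ∧ v ∈ subdiffE (g t) x := fun v hv => by
    simpa [GSet] using hsG hv
  have : Nonempty T := ⟨(hG v₀ hv₀).choose⟩
  -- Generators assigned to the same active index merge, as `∂g_t(x)` is convex.
  choose! τ hτ using hG
  have hfiber : ∀ t ∈ s.image τ, ∃ ζ ∈ subdiffE (g t) x,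
      ∑ v ∈ s with τ v = t, c v • v = (∑ v ∈ s with τ v = t, c v) • ζ := by
    intro t ht
    obtain ⟨v, hv, hvt⟩ := Finset.mem_image.1 ht
    refine Convex.exists_sum_smul_eq_sum_smul (convex_subdiffE _ _)
      ⟨v, Finset.mem_filter.2 ⟨hv, hvt⟩⟩
      (fun u hu => hc u (Finset.mem_filter.1 hu).1) fun u hu => ?_
    obtain ⟨hus, rfl⟩ := Finset.mem_filter.1 hu
    exact (hτ u hus).2
  choose! ζ hζ hζsum using hfiber
  refine ⟨s.image τ, fun t => ∑ v ∈ s with τ v = t, c v, ζ, ?_,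
    fun t _ => Finset.sum_nonneg fun v hv => hc v (Finset.mem_filter.1 hv).1, hζ, ?_⟩
  · intro t ht
    obtain ⟨v, hv, rfl⟩ := Finset.mem_image.1 ht
    exact (hτ v hv).1
  · rw [Finset.sum_congr rfl fun t ht => (hζsum t ht).symm,
      Finset.sum_fiberwise_of_maps_to fun v hv => Finset.mem_image_of_mem τ hv]

lemma inv_smul_mem_subdiff {f : Eucl n → ℝ} {x η : Eucl n} {lam : ℝ} (hlam : 0 < lam)
    (hη : ∀ y, ⟪η, y - x⟫ ≤ lam * (f y - f x)) : lam⁻¹ • η ∈ subdiff f x := by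
  intro y
  have : lam⁻¹ * ⟪η, y - x⟫ ≤ f y - f x := by rw [inv_mul_le_iff₀ hlam]; exact hη y
  rw [real_inner_smul_left]
  linarith

lemma subdiff_nonempty {f : Eucl n → ℝ} (hf : ConvexOn ℝ univ f) (x : Eucl n) :
    (subdiff f x).Nonempty := by
  obtain ⟨lam, η, -, hpos, hη, -⟩ := exists_multipliers_of_forall_exists_le (ι := Unit)
    (convex_singleton x) rfl (fun _ => continuousOn_univ.1 (hf.continuousOn isOpen_univ))
    (fun _ => hf) fun y hy => ⟨(), by rw [hy]⟩
  rw [Fintype.sum_unique] at hpos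
  exact ⟨_, inv_smul_mem_subdiff hpos (hη ())⟩

lemma exists_mem_subdiff_eq_smul {f : Eucl n → ℝ} (hf : ConvexOn ℝ univ f) {x η : Eucl n}
    {lam : ℝ} (hlam : 0 ≤ lam) (hη : ∀ y, ⟪η, y - x⟫ ≤ lam * (f y - f x)) :
    ∃ ξ ∈ subdiff f x, η = lam • ξ := by
  rcases hlam.eq_or_lt with rfl | hpos
  · obtain ⟨ξ, hξ⟩ := subdiff_nonempty hf x
    have := hη (x + η)
    rw [add_sub_cancel_left, zero_mul, real_inner_self_nonpos] at this
    exact ⟨ξ, hξ, by rw [this, zero_smul]⟩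
  · exact ⟨lam⁻¹ • η, inv_smul_mem_subdiff hpos hη, (smul_inv_smul₀ hpos.ne' η).symm⟩

theorem exists_sum_smul_subdiff_add_mem_normalCone_eq_zero {S : Set (Eucl n)} (hS : Convex ℝ S)
    {f : Fin p → Eucl n → ℝ} (hf : ∀ i, ConvexOn ℝ univ (f i)) {xh : Eucl n} (hxS : xh ∈ S)
    (hW : WeakEff f S xh) :
    ∃ (α : Fin p → ℝ) (ξ : Fin p → Eucl n) (ν : Eucl n), (∀ i, 0 ≤ α i) ∧ ∑ i, α i = 1 ∧
      (∀ i, ξ i ∈ subdiff (f i) xh) ∧ ν ∈ normalCone S xh ∧ ∑ i, α i • ξ i + ν = 0 := by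
  have hx : ∀ y ∈ S, ∃ i, f i xh ≤ f i y := fun y hy => by
    by_contra! h
    exact hW ⟨y, hy, h⟩
  obtain ⟨lam, η, hlam, hpos, hη, hηS⟩ := exists_multipliers_of_forall_exists_le hS hxS
    (fun i => continuousOn_univ.1 ((hf i).continuousOn isOpen_univ)) hf hx
  choose ξ hξ hηξ using fun i => exists_mem_subdiff_eq_smul (hf i) (hlam i) (hη i)
  set s := ∑ i, lam i
  refine ⟨fun i => lam i / s, ξ, -(s⁻¹ • ∑ i, η i), fun i => div_nonneg (hlam i) hpos.le,
    by rw [← Finset.sum_div, div_self hpos.ne'], hξ,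
    mem_normalCone_of_forall_inner_sub_nonpos fun y hy => ?_, ?_⟩
  · rw [inner_neg_left, real_inner_smul_left, sum_inner, neg_nonpos]
    exact mul_nonneg (inv_nonneg.2 hpos.le) (hηS y hy)
  · simp_rw [hηξ, div_eq_inv_mul, mul_smul, ← Finset.smul_sum]
    exact add_neg_cancel _

theorem weakEff_of_weakKKT {f : Fin p → Eucl n → ℝ} {g : T → Eucl n → EReal} {xh : Eucl n}
    (h : WeakKKT f g xh) : WeakEff f (feasSet g) xh := by
  rintro ⟨x, hxS, hlt⟩
  obtain ⟨α, Ts, β, ξ, ζ, hα, hα1, hTs, hβ, hξ, hζ, hsum⟩ := h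
  have hobj : ∑ i, α i * ⟪ξ i, x - xh⟫ < 0 := by
    obtain ⟨j, -, hj⟩ := Finset.exists_lt_of_sum_lt (s := Finset.univ) (f := 0) (g := α)
      (by simp [hα1])
    have hneg : ∀ i, ⟪ξ i, x - xh⟫ < 0 := fun i => by linarith [hξ i x, hlt i]
    refine (Finset.sum_lt_sum (g := 0) (fun i _ => mul_nonpos_of_nonneg_of_nonpos (hα i)
      (hneg i).le) ⟨j, Finset.mem_univ j, mul_neg_of_pos_of_neg hj (hneg j)⟩).trans_eq ?_
    simp
  have hcon : ∑ t ∈ Ts, β t * ⟪ζ t, x - xh⟫ ≤ 0 := by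
    refine Finset.sum_nonpos fun t ht => mul_nonpos_of_nonneg_of_nonpos (hβ t ht) ?_
    have := (hζ t ht x).trans (hxS t)
    rwa [hTs t ht, zero_add, EReal.coe_nonpos] at this
  have : ⟪∑ i, α i • ξ i + ∑ t ∈ Ts, β t • ζ t, x - xh⟫ =
      ∑ i, α i * ⟪ξ i, x - xh⟫ + ∑ t ∈ Ts, β t * ⟪ζ t, x - xh⟫ := by
    simp only [inner_add_left, sum_inner, real_inner_smul_left]
  rw [hsum, inner_zero_left] at this
  linarith

theorem stmt4_general
    (f : Fin p → Eucl n → ℝ) (g : T → Eucl n → EReal)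
    (hf : ∀ i, ConvexOn ℝ Set.univ (f i))
    (hgconv : ∀ t, ConvexE (g t))
    (xh : Eucl n) (hxS : xh ∈ feasSet g)
    (hlfm : LFMCQ g xh) :
    WeakEff f (feasSet g) xh ↔ WeakKKT f g xh := by
  refine ⟨fun hW => ?_, weakEff_of_weakKKT⟩
  obtain ⟨α, ξ, ν, hα, hα1, hξ, hν, hsum⟩ :=
    exists_sum_smul_subdiff_add_mem_normalCone_eq_zero (convex_feasSet hgconv) hf hxS hW
  rw [hlfm] at hν
  obtain ⟨Ts, β, ζ, hTs, hβ, hζ, rfl⟩ := exists_sum_smul_eq_of_mem_coneHull hν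
  exact ⟨α, Ts, β, ξ, ζ, hα, hα1, hTs, hβ, hξ, hζ, hsum⟩

/-- If LFMCQ holds at `x̂ ∈ S`, then `x̂` is a weak efficient solution of `(P)`
if and only if the weak KKT condition holds at `x̂`. -/
theorem stmt4
    (hn : 1 ≤ n) (hp : 1 ≤ p)
    (f : Fin p → Eucl n → ℝ) (g : T → Eucl n → EReal)
    (hf : ∀ i, ConvexOn ℝ Set.univ (f i))
    (hgconv : ∀ t, ConvexE (g t))
    (hgproper : ∀ t, ProperE (g t))
    (hglsc : ∀ t, LowerSemicontinuous (g t))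
    (xh : Eucl n) (hxS : xh ∈ feasSet g)
    (hlfm : LFMCQ g xh) :
    WeakEff f (feasSet g) xh ↔ WeakKKT f g xh :=
  stmt4_general f g hf hgconv xh hxS hlfm

end MOSIP
end
end

section
/- If x̂ ∈ S and ϑ(x̂, ξ, λ) = 0 for some ξ = (ξ_1, …, ξ_p) with ξ_i ∈ ∂f_i(x̂) for each i and some λ in the unit simplex, then x̂ is a weak efficient solution of (P). -/
/-!
If some `x ∈ S` improved every objective strictly, the subgradient inequality would give
`⟪ξ_i, x̂ - x⟫ ≥ f_i(x̂) - f_i(x) > 0` for every `i`, so the `λ`-weighted sum of these inner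
products, which is one of the terms of the supremum defining `ϑ(x̂, ξ, λ)`, would be positive.
-/

open Set Filter Topology
open scoped RealInnerProductSpace Pointwise

noncomputable section

namespace MOSIP

variable {n : ℕ} {T : Type*} {p : ℕ}

variable {n p : ℕ} {T : Type*}

theorem inner_sub_pos_of_mem_subdiff {h : Eucl n → ℝ} {x y ζ : Eucl n} (hζ : ζ ∈ subdiff h x)
    (hlt : h y < h x) : 0 < ⟪ζ, x - y⟫ := by
  have hsub := hζ y
  rw [← neg_sub, inner_neg_right] at hsub
  linarith

theorem simplex.sum_mul_pos {lam a : Fin p → ℝ} (hlam : simplex lam) (ha : ∀ i, 0 < a i) :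
    0 < ∑ i, lam i * a i := by
  obtain ⟨j, -, hj⟩ : ∃ j ∈ Finset.univ, (0 : Fin p → ℝ) j < lam j :=
    Finset.exists_lt_of_sum_lt (by simp [hlam.2])
  exact Finset.sum_pos' (fun i _ => mul_nonneg (hlam.1 i) (ha i).le)
    ⟨j, Finset.mem_univ j, mul_pos hj (ha j)⟩

theorem sum_mul_inner_le_gapFn {S : Set (Eucl n)} {x y : Eucl n} (hy : y ∈ S)
    (ξ : Fin p → Eucl n) (lam : Fin p → ℝ) :
    ((∑ i, lam i * ⟪ξ i, x - y⟫ : ℝ) : EReal) ≤ gapFn S x ξ lam :=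
  le_iSup₂ (f := fun y (_ : y ∈ S) => ((∑ i, lam i * ⟪ξ i, x - y⟫ : ℝ) : EReal)) y hy

theorem weakEff_of_gapFn_nonpos {f : Fin p → Eucl n → ℝ} {S : Set (Eucl n)} {xh : Eucl n}
    {ξ : Fin p → Eucl n} (hξ : ∀ i, ξ i ∈ subdiff (f i) xh) {lam : Fin p → ℝ}
    (hlam : simplex lam) (hgap : gapFn S xh ξ lam ≤ 0) : WeakEff f S xh := by
  rintro ⟨x, hxS, hlt⟩
  have hpos : 0 < ∑ i, lam i * ⟪ξ i, xh - x⟫ :=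
    hlam.sum_mul_pos fun i => inner_sub_pos_of_mem_subdiff (hξ i) (hlt i)
  have hnonpos : ((∑ i, lam i * ⟪ξ i, xh - x⟫ : ℝ) : EReal) ≤ 0 :=
    (sum_mul_inner_le_gapFn hxS ξ lam).trans hgap
  exact (EReal.coe_nonpos.mp hnonpos).not_gt hpos

theorem stmt5_general
    (f : Fin p → Eucl n → ℝ) (g : T → Eucl n → EReal)
    (xh : Eucl n)
    (ξ : Fin p → Eucl n) (hξ : ∀ i, ξ i ∈ subdiff (f i) xh)
    (lam : Fin p → ℝ) (hlam : simplex lam)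
    (hgap : gapFn (feasSet g) xh ξ lam = 0) :
    WeakEff f (feasSet g) xh :=
  weakEff_of_gapFn_nonpos hξ hlam hgap.le

/-- If `x̂ ∈ S` and `ϑ(x̂, ξ, λ) = 0` for some `ξ` with `ξ_i ∈ ∂f_i(x̂)` and
some `λ` in the unit simplex, then `x̂` is a weak efficient solution of `(P)`. -/
theorem stmt5
    (hn : 1 ≤ n) (hp : 1 ≤ p)
    (f : Fin p → Eucl n → ℝ) (g : T → Eucl n → EReal)
    (hf : ∀ i, ConvexOn ℝ Set.univ (f i))
    (hgconv : ∀ t, ConvexE (g t))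
    (hgproper : ∀ t, ProperE (g t))
    (hglsc : ∀ t, LowerSemicontinuous (g t))
    (xh : Eucl n) (hxS : xh ∈ feasSet g)
    (ξ : Fin p → Eucl n) (hξ : ∀ i, ξ i ∈ subdiff (f i) xh)
    (lam : Fin p → ℝ) (hlam : simplex lam)
    (hgap : gapFn (feasSet g) xh ξ lam = 0) :
    WeakEff f (feasSet g) xh :=
  stmt5_general f g xh ξ hξ lam hlam hgap

end MOSIP
end
end

section
/- If x̂ ∈ S and ϑ(x̂, ξ, λ) = 0 for some ξ = (ξ_1, …, ξ_p) with ξ_i ∈ ∂f_i(x̂) for each i and some λ in the unit simplex with λ_i > 0 for all i, then x̂ is an efficient solution of (P). -/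
open Set Filter Topology
open scoped RealInnerProductSpace Pointwise

noncomputable section

namespace MOSIP

variable {n : ℕ} {T : Type*} {p : ℕ}

variable {n p : ℕ} {T : Type*}

/-! The gap function at `xh` dominates `Σ λ_i ⟪ξ_i, xh − y⟫` for every feasible `y`, so a
vanishing gap together with the subgradient inequalities makes `xh` a minimiser of the
scalarisation `Σ λ_i f_i` on `S`; with strictly positive weights, such a minimiser is efficient. -/

theorem le_gapFn {S : Set (Eucl n)} {y : Eucl n} (hy : y ∈ S) (x : Eucl n)
    (ξ : Fin p → Eucl n) (lam : Fin p → ℝ) :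
    ((∑ i, lam i * ⟪ξ i, x - y⟫ : ℝ) : EReal) ≤ gapFn S x ξ lam :=
  le_iSup₂ (f := fun y (_ : y ∈ S) => ((∑ i, lam i * ⟪ξ i, x - y⟫ : ℝ) : EReal)) y hy

theorem inner_sub_le_of_mem_subdiff {h : Eucl n → ℝ} {x ζ : Eucl n} (hζ : ζ ∈ subdiff h x)
    (y : Eucl n) : ⟪ζ, y - x⟫ ≤ h y - h x := by
  linarith [hζ y]

theorem isMinOn_weightedSum_of_gapFn_nonpos {f : Fin p → Eucl n → ℝ} {S : Set (Eucl n)}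
    {xh : Eucl n} {ξ : Fin p → Eucl n} {lam : Fin p → ℝ} (hξ : ∀ i, ξ i ∈ subdiff (f i) xh)
    (hlam : ∀ i, 0 ≤ lam i) (hgap : gapFn S xh ξ lam ≤ 0) :
    IsMinOn (fun x => ∑ i, lam i * f i x) S xh := by
  intro y hy
  have hgap_y : ∑ i, lam i * ⟪ξ i, xh - y⟫ ≤ 0 := by
    exact_mod_cast (le_gapFn hy xh ξ lam).trans hgap
  have hinner : ∀ i, lam i * ⟪ξ i, xh - y⟫ = -(lam i * ⟪ξ i, y - xh⟫) := fun i => by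
    rw [← neg_sub y xh, inner_neg_right, mul_neg]
  have hsub : ∑ i, lam i * ⟪ξ i, y - xh⟫ ≤ ∑ i, lam i * (f i y - f i xh) :=
    Finset.sum_le_sum fun i _ =>
      mul_le_mul_of_nonneg_left (inner_sub_le_of_mem_subdiff (hξ i) y) (hlam i)
  simp only [hinner, Finset.sum_neg_distrib, mul_sub, Finset.sum_sub_distrib] at hgap_y hsub
  show ∑ i, lam i * f i xh ≤ ∑ i, lam i * f i y
  linarith

theorem eff_of_isMinOn_weightedSum {f : Fin p → Eucl n → ℝ} {S : Set (Eucl n)}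
    {xh : Eucl n} {lam : Fin p → ℝ} (hpos : ∀ i, 0 < lam i)
    (hmin : IsMinOn (fun x => ∑ i, lam i * f i x) S xh) : Eff f S xh := by
  rintro ⟨x, hx, hle, j, hj⟩
  have hlt : ∑ i, lam i * f i x < ∑ i, lam i * f i xh :=
    Finset.sum_lt_sum (fun i _ => mul_le_mul_of_nonneg_left (hle i) (hpos i).le)
      ⟨j, Finset.mem_univ j, mul_lt_mul_of_pos_left hj (hpos j)⟩
  exact (hmin hx).not_gt hlt

theorem stmt9_general
    (f : Fin p → Eucl n → ℝ) (g : T → Eucl n → EReal)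
    (xh : Eucl n)
    (ξ : Fin p → Eucl n) (hξ : ∀ i, ξ i ∈ subdiff (f i) xh)
    (lam : Fin p → ℝ) (hpos : ∀ i, 0 < lam i)
    (hgap : gapFn (feasSet g) xh ξ lam = 0) :
    Eff f (feasSet g) xh :=
  eff_of_isMinOn_weightedSum hpos
    (isMinOn_weightedSum_of_gapFn_nonpos hξ (fun i => (hpos i).le) hgap.le)

/-- If `x̂ ∈ S` and `ϑ(x̂, ξ, λ) = 0` for some `ξ` with `ξ_i ∈ ∂f_i(x̂)` and
some `λ` in the unit simplex with all `λ_i > 0`, then `x̂` is an efficient solution of `(P)`. -/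
theorem stmt9
    (hn : 1 ≤ n) (hp : 1 ≤ p)
    (f : Fin p → Eucl n → ℝ) (g : T → Eucl n → EReal)
    (hf : ∀ i, ConvexOn ℝ Set.univ (f i))
    (hgconv : ∀ t, ConvexE (g t))
    (hgproper : ∀ t, ProperE (g t))
    (hglsc : ∀ t, LowerSemicontinuous (g t))
    (xh : Eucl n) (hxS : xh ∈ feasSet g)
    (ξ : Fin p → Eucl n) (hξ : ∀ i, ξ i ∈ subdiff (f i) xh)
    (lam : Fin p → ℝ) (hlam : simplex lam) (hpos : ∀ i, 0 < lam i)
    (hgap : gapFn (feasSet g) xh ξ lam = 0) :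
    Eff f (feasSet g) xh :=
  stmt9_general f g xh ξ hξ lam hpos hgap

end MOSIP
end
end
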